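/- arXiv:1712.05361 — 4 statements merged into one kernel-verified Lean document; each statement's English description precedes it below -/
import Mathlib

section
/- Let Q and H be countable groups. Let (S_i)_{i∈ℕ} be an ascending sequence of finite subsets of Q whose union generates Q, and let (T_i)_{i∈ℕ} be an ascending sequence of finite subsets of H whose union generates H. Suppose there is a map r : H → Q such that for every i: (1) for all x, y ∈ H, if x⁻¹ * y lies in the subgroup of H generated by T_i, then (r x)⁻¹ * (r y) lies in the subgroup of Q generated by S_i; and (2) for every q ∈ Q there exists h ∈ H such that (r h)⁻¹ * q lies in the subgroup of Q generated by S_i. If H is finitely generated, then Q is finitely generated. -/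
/-- Let `Q` and `H` be countable groups, `(S i)` an ascending sequence of
finite subsets of `Q` whose union generates `Q`, and `(T i)` an ascending sequence of finite
subsets of `H` whose union generates `H`.  Suppose `r : H → Q` is a map such that for every
`i`: (1) if `x⁻¹ * y` lies in the subgroup generated by `T i` then `(r x)⁻¹ * (r y)` lies in
the subgroup generated by `S i`; and (2) every `q ∈ Q` satisfies `(r h)⁻¹ * q ∈ ⟨S i⟩` for
some `h ∈ H`.  If `H` is finitely generated then so is `Q`. -/
theorem finitely_generated_of_quasiretract
    {Q H : Type*} [Group Q] [Group H] [Countable Q] [Countable H]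
    (S : ℕ → Finset Q) (T : ℕ → Finset H)
    (hSmono : Monotone S) (hTmono : Monotone T)
    (hSgen : Subgroup.closure (⋃ i, (S i : Set Q)) = ⊤)
    (hTgen : Subgroup.closure (⋃ i, (T i : Set H)) = ⊤)
    (r : H → Q)
    (h1 : ∀ i : ℕ, ∀ x y : H, x⁻¹ * y ∈ Subgroup.closure (T i : Set H) →
      (r x)⁻¹ * (r y) ∈ Subgroup.closure (S i : Set Q))
    (h2 : ∀ i : ℕ, ∀ q : Q, ∃ h : H, (r h)⁻¹ * q ∈ Subgroup.closure (S i : Set Q))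
    (hH : Group.FG H) :
    Group.FG Q := by
  classical
  -- H is generated by a finite set, which sits inside the closure of some T i₀
  obtain ⟨F, hF⟩ := hH.1
  have hdir : Directed (· ≤ ·) (fun i => Subgroup.closure (T i : Set H)) := by
    intro i j
    exact ⟨max i j, Subgroup.closure_mono (by exact_mod_cast hTmono (le_max_left i j)),
      Subgroup.closure_mono (by exact_mod_cast hTmono (le_max_right i j))⟩
  have key : ∀ x : H, ∃ i, x ∈ Subgroup.closure (T i : Set H) := by
    intro x
    have : x ∈ Subgroup.closure (⋃ i, (T i : Set H)) := hTgen ▸ Subgroup.mem_top x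
    rw [Subgroup.closure_iUnion] at this
    exact (Subgroup.mem_iSup_of_directed hdir).mp this
  -- pick i₀ such that all generators of H are in closure (T i₀)
  choose f hf using key
  obtain ⟨i₀, hi₀⟩ : ∃ i₀, ∀ x ∈ F, x ∈ Subgroup.closure (T i₀ : Set H) := by
    refine ⟨(F.image f).sup id, fun x hx => ?_⟩
    refine Subgroup.closure_mono ?_ (hf x)
    have hle : f x ≤ (F.image f).sup id :=
      Finset.le_sup (f := id) (Finset.mem_image_of_mem f hx)
    exact_mod_cast hTmono hle
  have hTtop : Subgroup.closure (T i₀ : Set H) = ⊤ := by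
    rw [eq_top_iff, ← hF, Subgroup.closure_le]
    exact fun x hx => hi₀ x hx
  -- Q is generated by S i₀ together with r 1
  refine ⟨⟨insert (r 1) (S i₀), ?_⟩⟩
  rw [eq_top_iff]
  intro q _
  obtain ⟨h, hh⟩ := h2 i₀ q
  have h1' : (r 1)⁻¹ * r h ∈ Subgroup.closure (S i₀ : Set Q) := by
    refine h1 i₀ 1 h ?_
    rw [hTtop]; exact Subgroup.mem_top _
  have hmono : Subgroup.closure (S i₀ : Set Q) ≤
      Subgroup.closure ((insert (r 1) (S i₀) : Finset Q) : Set Q) :=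
    Subgroup.closure_mono (by simp [Set.subset_insert])
  have hr1 : r 1 ∈ Subgroup.closure ((insert (r 1) (S i₀) : Finset Q) : Set Q) :=
    Subgroup.subset_closure (by simp)
  have : q = r 1 * ((r 1)⁻¹ * r h) * ((r h)⁻¹ * q) := by group
  rw [this]
  exact Subgroup.mul_mem _ (Subgroup.mul_mem _ hr1 (hmono h1')) (hmono hh)
end

section
/- Let G ≤ Aut(T_d) be a self-similar subgroup that is i₀-persistent, where i₀ is the largest letter of the alphabet X. If the triples (L₋, σ, (g_1, …, g_n), L₊) and (L₋', σ', (g'_1, …, g'_{n'}), L₊') represent the same element of the Röver–Nekrashevych group V_d(G), with the leaves of L₊ and of L₊' listed in ascending lexicographic order, then g_n = g'_{n'}; that is, the group elements attached to the lexicographically largest leaves of L₊ and L₊' coincide. -/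
/-!
The last leaf of a leaf set, listed lexicographically, is the leaf through the constant point
`i₀ i₀ i₀ …`, hence a power `i₀ᵏ`. Persistence at `i₀` gives `f (i₀ :: w) = y :: f w`, so on
the cone `i₀ᵐ·C` (for `m` at least both exponents) `h` acts both as `p ↦ A·ĝ p` and as
`p ↦ B·ĝ' p`, where `g, g'` are the elements attached to the last leaves. Since `X` has two
letters, the first letter of `ĝ p` is not constant, which forces `|A| = |B|`, then `ĝ = ĝ'`
and finally `g = g'`.
-/

namespace RoverNekrashevych

variable {X : Type*}

/-- The state (section) of `f` at the word `u`. -/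
def state (f : List X → List X) (u : List X) : List X → List X :=
  fun w => (f (u ++ w)).drop u.length

/-- `f` is an automorphism of the infinite rooted tree with vertex set `List X`. -/
def IsTreeAut (f : Equiv.Perm (List X)) : Prop :=
  f [] = [] ∧ ∀ (u : List X) (x : X), ∃ y : X, f (u ++ [x]) = f u ++ [y]

/-- `G` consists of tree automorphisms. -/
def IsTreeAutGroup (G : Subgroup (Equiv.Perm (List X))) : Prop :=
  ∀ f ∈ G, IsTreeAut f

/-- `G` is self-similar: all states of elements of `G` are realized by elements of `G`. -/
def SelfSimilar (G : Subgroup (Equiv.Perm (List X))) : Prop :=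
  ∀ f ∈ G, ∀ u : List X, ∃ g ∈ G, ⇑g = state (⇑f) u

/-- A function is finite-state if it has only finitely many states. -/
def FiniteStateFun (f : List X → List X) : Prop :=
  Set.Finite {g : List X → List X | ∃ u : List X, g = state f u}

/-- `G` is finite-state if all its elements are. -/
def FiniteStateGroup (G : Subgroup (Equiv.Perm (List X))) : Prop :=
  ∀ f ∈ G, FiniteStateFun ⇑f

/-- `G` is `i`-persistent: the state of every element at `[i]` is the element itself. -/
def Persistent (G : Subgroup (Equiv.Perm (List X))) (i : X) : Prop :=
  ∀ f ∈ G, state (⇑f) [i] = ⇑f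

/-- `G` is coarsely diagonal: for `f ∈ G`, each state `f_u` is realized by some `g ∈ G`,
and `g⁻¹ * f` has finite order. -/
def CoarselyDiagonal (G : Subgroup (Equiv.Perm (List X))) : Prop :=
  ∀ f ∈ G, ∀ u : List X, ∃ g ∈ G, ⇑g = state (⇑f) u ∧ IsOfFinOrder (g⁻¹ * f)

/-- The length-`n` prefix of a boundary point `p : ℕ → X`. -/
def prefixFn (p : ℕ → X) (n : ℕ) : List X :=
  List.ofFn fun i : Fin n => p i

/-- The homeomorphism of the boundary `ℕ → X` induced by a tree automorphism:
for every `n`, the length-`n` prefix of `boundary f p` is the `f`-image of the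
length-`n` prefix of `p`. -/
def boundary (f : List X → List X) (p : ℕ → X) : ℕ → X :=
  fun n => (f (prefixFn p (n + 1))).getD n (p n)

/-- Concatenation `u·p` of a finite word and a boundary point. -/
def catWord (u : List X) (p : ℕ → X) : ℕ → X :=
  fun n => if h : n < u.length then u.get ⟨n, h⟩ else p (n - u.length)

/-- A leaf set: a finite set of words such that every boundary point has exactly one
prefix in the set. -/
def IsLeafSet (L : Set (List X)) : Prop :=
  L.Finite ∧ ∀ p : ℕ → X, ∃! u : List X, u ∈ L ∧ prefixFn p u.length = u

variable [LinearOrder X]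

/-- The triple `(L₋, σ, (g_1,…,g_n), L₊)`, with the leaves of `L₋` and `L₊` listed by the
strictly increasing (in the lexicographic order) enumerations `u` and `v`, represents the
homeomorphism `h` of the boundary: `h (vᵢ·p) = u_{σ i}·(ĝᵢ p)` for all `i` and `p`. -/
def Represents (G : Subgroup (Equiv.Perm (List X))) (h : (ℕ → X) → ℕ → X)
    (n : ℕ) (u v : Fin n → List X) (σ : Equiv.Perm (Fin n))
    (g : Fin n → Equiv.Perm (List X)) : Prop :=
  StrictMono u ∧ StrictMono v ∧ IsLeafSet (Set.range u) ∧ IsLeafSet (Set.range v) ∧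
  (∀ i, g i ∈ G) ∧
  ∀ (i : Fin n) (p : ℕ → X), h (catWord (v i) p) = catWord (u (σ i)) (boundary (⇑(g i)) p)

/-- The underlying set of the Röver–Nekrashevych group `V_d(G)`: all self-bijections of the
boundary represented by some triple. -/
def RNSet (G : Subgroup (Equiv.Perm (List X))) : Set (Equiv.Perm (ℕ → X)) :=
  {h | ∃ (n : ℕ) (u v : Fin n → List X) (σ : Equiv.Perm (Fin n))
      (g : Fin n → Equiv.Perm (List X)), Represents G (⇑h) n u v σ g}

end RoverNekrashevych

namespace RoverNekrashevych

section Words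

variable {X : Type*}

lemma prefixFn_zero (p : ℕ → X) : prefixFn p 0 = [] := by simp [prefixFn]

lemma prefixFn_succ (p : ℕ → X) (n : ℕ) :
    prefixFn p (n + 1) = prefixFn p n ++ [p n] := by
  simp only [prefixFn, List.ofFn_succ', List.concat_eq_append, Fin.val_castSucc, Fin.val_last]

lemma eq_of_forall_prefixFn_eq {q q' : ℕ → X} (h : ∀ m, prefixFn q m = prefixFn q' m) :
    q = q' := by
  funext n
  have h1 := h (n + 1)
  rw [prefixFn_succ, prefixFn_succ, h n] at h1
  simpa using h1

lemma prefixFn_catWord (a : List X) (p : ℕ → X) (m : ℕ) :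
    prefixFn (catWord a p) m = a.take m ++ prefixFn p (m - a.length) := by
  apply List.ext_getElem
  · simp [prefixFn]; omega
  · intro i h1 _
    simp only [prefixFn, List.length_ofFn] at h1
    simp only [prefixFn, List.getElem_ofFn, catWord]
    by_cases hi : i < a.length
    · rw [dif_pos hi, List.getElem_append_left (by simp; omega)]
      simp
    · rw [dif_neg hi, List.getElem_append_right (by simp; omega)]
      simp only [List.getElem_ofFn, List.length_take]
      congr 1
      omega

lemma prefixFn_catWord_length (w : List X) (p : ℕ → X) :
    prefixFn (catWord w p) w.length = w := by
  rw [prefixFn_catWord, Nat.sub_self, prefixFn_zero, List.take_length, List.append_nil]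

lemma catWord_append (a b : List X) (p : ℕ → X) :
    catWord (a ++ b) p = catWord a (catWord b p) := by
  apply eq_of_forall_prefixFn_eq
  intro m
  rw [prefixFn_catWord, prefixFn_catWord, prefixFn_catWord, List.take_append,
    List.append_assoc, List.length_append, Nat.sub_sub]

lemma catWord_length_add (a : List X) (p : ℕ → X) (t : ℕ) :
    catWord a p (a.length + t) = p t := by
  simp [catWord]

end Words

namespace IsTreeAut

variable {X : Type*} {f f' : Equiv.Perm (List X)}

lemma length_apply (hf : IsTreeAut f) (w : List X) : (f w).length = w.length := by
  induction w using List.reverseRecOn with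
  | nil => simp [hf.1]
  | append_singleton u x ih =>
    obtain ⟨y, hy⟩ := hf.2 u x
    simp [hy, ih]

lemma apply_append (hf : IsTreeAut f) (u w : List X) :
    f (u ++ w) = f u ++ state (⇑f) u w := by
  have htake : (f (u ++ w)).take u.length = f u := by
    induction w using List.reverseRecOn with
    | nil => rw [List.append_nil, ← hf.length_apply u, List.take_length]
    | append_singleton w x ih =>
      obtain ⟨y, hy⟩ := hf.2 (u ++ w) x
      rw [← List.append_assoc, hy,
        List.take_append_of_le_length (by rw [hf.length_apply]; simp), ih]
  rw [← List.take_append_drop u.length (f (u ++ w)), htake]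
  rfl

lemma prefixFn_boundary (hf : IsTreeAut f) (p : ℕ → X) (m : ℕ) :
    prefixFn (boundary (⇑f) p) m = f (prefixFn p m) := by
  induction m with
  | zero => rw [prefixFn_zero, prefixFn_zero, hf.1]
  | succ m ih =>
    obtain ⟨y, hy⟩ := hf.2 (prefixFn p m) (p m)
    have hlen : (f (prefixFn p m)).length = m := by simp [hf.length_apply, prefixFn]
    have hb : boundary (⇑f) p m = y := by
      simp only [boundary, prefixFn_succ, hy, List.getD_append_right _ _ _ _ hlen.le, hlen,
        Nat.sub_self, List.getD_cons_zero]
    rw [prefixFn_succ, ih, prefixFn_succ, hy, hb]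

lemma ext_of_boundary_eq [Nonempty X] (hf : IsTreeAut f) (hf' : IsTreeAut f')
    (h : boundary ⇑f = boundary ⇑f') : f = f' := by
  obtain ⟨x₀⟩ := ‹Nonempty X›
  ext1 w
  have hw := prefixFn_catWord_length w fun _ => x₀
  rw [← hw, ← hf.prefixFn_boundary, ← hf'.prefixFn_boundary, h]

lemma exists_boundary_zero_ne [Nontrivial X] (hf : IsTreeAut f) :
    ∃ p p' : ℕ → X, boundary (⇑f) p 0 ≠ boundary (⇑f) p' 0 := by
  obtain ⟨x, x', hxx'⟩ := exists_pair_ne X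
  refine ⟨fun _ => x, fun _ => x', fun h => hxx' ?_⟩
  have hsingle : ∀ p : ℕ → X, [boundary (⇑f) p 0] = f [p 0] := by
    intro p
    simpa [prefixFn_succ, prefixFn_zero] using hf.prefixFn_boundary p 1
  have := f.injective ((hsingle fun _ => x).symm.trans (h ▸ hsingle fun _ => x'))
  simpa using this

lemma length_le_of_catWord_boundary_eq [Nontrivial X] (hf : IsTreeAut f) {A B : List X}
    {q : (ℕ → X) → ℕ → X} (hE : ∀ p, catWord A (boundary (⇑f) p) = catWord B (q p)) :
    B.length ≤ A.length := by
  by_contra! hlen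
  have hconst : ∀ p, boundary (⇑f) p 0 = B[A.length] := by
    intro p
    simpa [catWord, hlen] using congrFun (hE p) A.length
  obtain ⟨p, p', hne⟩ := hf.exists_boundary_zero_ne
  exact hne ((hconst p).trans (hconst p').symm)

lemma eq_of_catWord_boundary_eq [Nontrivial X] (hf : IsTreeAut f) (hf' : IsTreeAut f')
    {A B : List X} (hE : ∀ p, catWord A (boundary (⇑f) p) = catWord B (boundary (⇑f') p)) :
    f = f' := by
  have hlen : A.length = B.length :=
    le_antisymm (hf'.length_le_of_catWord_boundary_eq fun p => (hE p).symm)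
      (hf.length_le_of_catWord_boundary_eq hE)
  refine hf.ext_of_boundary_eq hf' (funext fun p => funext fun t => ?_)
  have := congrFun (hE p) (A.length + t)
  rwa [catWord_length_add, hlen, catWord_length_add] at this

lemma exists_apply_cons_of_state_eq (hf : IsTreeAut f) {i : X} (hi : state (⇑f) [i] = ⇑f) :
    ∃ y : X, ∀ w : List X, f (i :: w) = y :: f w := by
  obtain ⟨y, hy⟩ : ∃ y, f [i] = [y] := List.length_eq_one_iff.mp (hf.length_apply [i])
  refine ⟨y, fun w => ?_⟩
  simpa [hi, hy] using hf.apply_append [i] w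

lemma boundary_catWord_replicate (hf : IsTreeAut f) {i y : X}
    (hy : ∀ w : List X, f (i :: w) = y :: f w) (s : ℕ) (p : ℕ → X) :
    boundary (⇑f) (catWord (List.replicate s i) p)
      = catWord (List.replicate s y) (boundary (⇑f) p) := by
  have hrep : ∀ (s : ℕ) (w : List X),
      f (List.replicate s i ++ w) = List.replicate s y ++ f w := by
    intro s w
    induction s with
    | zero => simp
    | succ s ih => simp [List.replicate_succ, hy, ih]
  apply eq_of_forall_prefixFn_eq
  intro m
  rw [hf.prefixFn_boundary, prefixFn_catWord, prefixFn_catWord, hf.prefixFn_boundary,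
    List.take_replicate, List.take_replicate, List.length_replicate, List.length_replicate,
    hrep]

end IsTreeAut

section LeafSets

variable {X : Type*}

lemma IsLeafSet.eq_of_prefix [Nonempty X] {L : Set (List X)} (hL : IsLeafSet L)
    {a b : List X} (ha : a ∈ L) (hb : b ∈ L) (hab : a <+: b) : a = b := by
  obtain ⟨x₀⟩ := ‹Nonempty X›
  obtain ⟨w, _, huniq⟩ := hL.2 (catWord b fun _ => x₀)
  have ha' : prefixFn (catWord b fun _ => x₀) a.length = a := by
    rw [prefixFn_catWord, Nat.sub_eq_zero_of_le hab.length_le, prefixFn_zero, List.append_nil]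
    exact (List.prefix_iff_eq_take.mp hab).symm
  rw [huniq a ⟨ha, ha'⟩, huniq b ⟨hb, prefixFn_catWord_length b _⟩]

lemma IsLeafSet.exists_replicate_mem {L : Set (List X)} (hL : IsLeafSet L) (i : X) :
    ∃ k, List.replicate k i ∈ L := by
  obtain ⟨w, ⟨hw, hpre⟩, _⟩ := hL.2 fun _ => i
  refine ⟨w.length, ?_⟩
  rwa [← hpre, prefixFn, List.ofFn_const] at hw

variable [LinearOrder X] {i₀ : X}

lemma replicate_prefix_of_replicate_lt (htop : ∀ x : X, x ≤ i₀) :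
    ∀ (k : ℕ) (w : List X), List.replicate k i₀ < w → List.replicate k i₀ <+: w
  | 0, _, _ => List.nil_prefix
  | k + 1, w, h => by
    rw [List.replicate_succ] at h ⊢
    cases (h : List.Lex (· < ·) (i₀ :: List.replicate k i₀) w) with
    | cons htail =>
      exact List.cons_prefix_cons.mpr ⟨rfl, replicate_prefix_of_replicate_lt htop k _ htail⟩
    | rel hr => exact absurd hr (not_lt.2 (htop _))

lemma IsLeafSet.le_replicate (htop : ∀ x : X, x ≤ i₀) {L : Set (List X)} (hL : IsLeafSet L)
    {k : ℕ} (hk : List.replicate k i₀ ∈ L) {a : List X} (ha : a ∈ L) :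
    a ≤ List.replicate k i₀ := by
  have : Nonempty X := ⟨i₀⟩
  by_contra! hlt
  exact hlt.ne (hL.eq_of_prefix hk ha (replicate_prefix_of_replicate_lt htop k a hlt))

lemma exists_last_eq_replicate (htop : ∀ x : X, x ≤ i₀) {n : ℕ} (hn : 0 < n)
    {v : Fin n → List X} (hv : StrictMono v) (hL : IsLeafSet (Set.range v)) :
    ∃ k, v ⟨n - 1, by omega⟩ = List.replicate k i₀ := by
  obtain ⟨k, j, hj⟩ := hL.exists_replicate_mem i₀
  refine ⟨k, le_antisymm (hL.le_replicate htop ⟨j, hj⟩ ⟨_, rfl⟩) ?_⟩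
  rw [← hj]
  exact hv.monotone (Fin.le_def.mpr (by simp; omega))

end LeafSets

variable {X : Type*} [LinearOrder X]

lemma Represents.exists_apply_catWord_replicate {G : Subgroup (Equiv.Perm (List X))}
    (hG : IsTreeAutGroup G) {i₀ : X} (htop : ∀ x : X, x ≤ i₀) (hpers : Persistent G i₀)
    {h : (ℕ → X) → ℕ → X} {n : ℕ} (hn : 0 < n) {u v : Fin n → List X}
    {σ : Equiv.Perm (Fin n)} {g : Fin n → Equiv.Perm (List X)}
    (hrep : Represents G h n u v σ g) :
    ∃ k, ∀ m, k ≤ m → ∃ A : List X, ∀ p,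
      h (catWord (List.replicate m i₀) p) =
        catWord A (boundary (⇑(g ⟨n - 1, by omega⟩)) p) := by
  obtain ⟨-, hv, -, hLv, hgG, hH⟩ := hrep
  set ℓ : Fin n := ⟨n - 1, by omega⟩
  have hf : IsTreeAut (g ℓ) := hG _ (hgG ℓ)
  obtain ⟨k, hk⟩ := exists_last_eq_replicate htop hn hv hLv
  obtain ⟨y, hy⟩ := hf.exists_apply_cons_of_state_eq (hpers _ (hgG ℓ))
  refine ⟨k, fun m hm => ⟨u (σ ℓ) ++ List.replicate (m - k) y, fun p => ?_⟩⟩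
  rw [← Nat.add_sub_cancel' hm, List.replicate_add, catWord_append, ← hk, hH ℓ,
    hf.boundary_catWord_replicate hy, catWord_append, Nat.add_sub_cancel_left]

/-- Let `G ≤ Aut(T_d)` be self-similar and `i₀`-persistent, where `i₀` is
the largest letter of the alphabet.  If two triples represent the same element of the
Röver–Nekrashevych group `V_d(G)`, with leaves listed in ascending lexicographic order, then
the group elements attached to the lexicographically largest leaves coincide. -/
theorem state_at_last_leaf_well_defined [Fintype X] (hd : 2 ≤ Fintype.card X)
    (i₀ : X) (htop : ∀ x : X, x ≤ i₀)
    (G : Subgroup (Equiv.Perm (List X))) (hG : IsTreeAutGroup G)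
    (hpers : Persistent G i₀)
    (h : (ℕ → X) → ℕ → X)
    (n n' : ℕ) (hn : 0 < n) (hn' : 0 < n')
    (u v : Fin n → List X) (σ : Equiv.Perm (Fin n)) (g : Fin n → Equiv.Perm (List X))
    (u' v' : Fin n' → List X) (σ' : Equiv.Perm (Fin n')) (g' : Fin n' → Equiv.Perm (List X))
    (hrep : Represents G h n u v σ g) (hrep' : Represents G h n' u' v' σ' g') :
    g ⟨n - 1, by omega⟩ = g' ⟨n' - 1, by omega⟩ := by
  have : Nontrivial X := Fintype.one_lt_card_iff_nontrivial.mp hd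
  obtain ⟨k, hk⟩ := hrep.exists_apply_catWord_replicate hG htop hpers hn
  obtain ⟨k', hk'⟩ := hrep'.exists_apply_catWord_replicate hG htop hpers hn'
  obtain ⟨A, hA⟩ := hk (max k k') (le_max_left k k')
  obtain ⟨B, hB⟩ := hk' (max k k') (le_max_right k k')
  exact IsTreeAut.eq_of_catWord_boundary_eq (hG _ (hrep.2.2.2.2.1 _)) (hG _ (hrep'.2.2.2.2.1 _))
    fun p => (hA p).symm.trans (hB p)

end RoverNekrashevych
end

section
/- Let F be a finite field and let α ∈ F⟦X⟧ be a power series whose coefficient sequence is eventually periodic. Then the set { shift_e(α · γ) : e ∈ ℕ, γ ∈ F[X] a polynomial of degree < e } is a finite subset of F⟦X⟧. Likewise, for any β ∈ F⟦X⟧ with eventually periodic coefficient sequence, the set { shift_e β : e ∈ ℕ } is finite. -/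
/-!
If the coefficients of `σ` repeat with period `m` from index `N` on, then
`shift (e + m) σ = shift e σ` for `e ≥ N`, so `σ` has at most `N + m` distinct shifts.
If `deg γ < e`, the `i`-th coefficient of `shift e (α * γ)` is `∑_{j < e} γ_j α_{i + e - j}`,
so `shift e (α * γ) = ∑_{j < e} γ_j • shift (e - j) α` lies in the span of the finitely many
shifts of `α`; over a finite field such a span is a finite set.
-/

namespace RoverNekrashevych

/-- The shift of a power series: `(shift e σ)_i = σ_{i+e}`. -/
noncomputable def shift {F : Type*} [CommSemiring F] (e : ℕ) (σ : PowerSeries F) :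
    PowerSeries F :=
  PowerSeries.mk fun i => PowerSeries.coeff (i + e) σ

/-- The coefficient sequence of `σ` is eventually periodic. -/
def EventuallyPeriodic {F : Type*} [CommSemiring F] (σ : PowerSeries F) : Prop :=
  ∃ (N m : ℕ), 1 ≤ m ∧ ∀ n : ℕ, N ≤ n →
    PowerSeries.coeff (n + m) σ = PowerSeries.coeff n σ

open PowerSeries
open scoped Polynomial

section CommSemiring

variable {R : Type*} [CommSemiring R]

theorem shift_add_mul_period {σ : R⟦X⟧} {N m : ℕ}
    (hper : ∀ n, N ≤ n → coeff (n + m) σ = coeff n σ) {e : ℕ} (he : N ≤ e) (k : ℕ) :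
    shift (e + k * m) σ = shift e σ := by
  induction k with
  | zero => simp
  | succ k ih =>
    rw [← ih]
    ext i
    simp only [shift, coeff_mk]
    rw [show i + (e + (k + 1) * m) = i + (e + k * m) + m by ring]
    exact hper _ (by omega)

theorem EventuallyPeriodic.finite_range_shift {σ : R⟦X⟧} (hσ : EventuallyPeriodic σ) :
    (Set.range fun e => shift e σ).Finite := by
  obtain ⟨N, m, hm, hper⟩ := hσ
  refine ((Set.finite_lt_nat (N + m)).image fun k => shift k σ).subset ?_
  rintro _ ⟨e, rfl⟩
  rcases lt_or_ge e N with he | he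
  · exact ⟨e, show e < N + m by omega, rfl⟩
  · refine ⟨N + (e - N) % m, show _ < N + m by have := Nat.mod_lt (e - N) hm; omega, ?_⟩
    have hdecomp : N + (e - N) % m + (e - N) / m * m = e := by
      have := Nat.mod_add_div' (e - N) m
      omega
    dsimp only
    rw [← shift_add_mul_period hper (Nat.le_add_right N ((e - N) % m)) ((e - N) / m), hdecomp]

theorem shift_mul_polynomial (α : R⟦X⟧) {γ : R[X]} {e : ℕ} (hγ : γ.degree < e) :
    shift e (α * (γ : R⟦X⟧)) = ∑ j ∈ Finset.range e, γ.coeff j • shift (e - j) α := by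
  ext i
  rw [map_sum]
  simp only [shift, coeff_mk, PowerSeries.coeff_smul, smul_eq_mul]
  rw [mul_comm, PowerSeries.coeff_mul, Finset.Nat.sum_antidiagonal_eq_sum_range_succ_mk]
  simp only [Polynomial.coeff_coe]
  rw [← Finset.sum_subset (Finset.range_subset_range.mpr (by omega : e ≤ i + e + 1))]
  · refine Finset.sum_congr rfl fun j hj => ?_
    rw [Finset.mem_range] at hj
    rw [show i + e - j = i + (e - j) by omega]
  · -- the terms with `j ≥ e` vanish because `deg γ < e`
    intro j _ hj
    rw [Finset.mem_range, not_lt] at hj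
    rw [Polynomial.coeff_eq_zero_of_degree_lt (hγ.trans_le (by exact_mod_cast hj)), zero_mul]

theorem shift_mul_polynomial_mem_span (α : R⟦X⟧) {γ : R[X]} {e : ℕ} (hγ : γ.degree < e) :
    shift e (α * (γ : R⟦X⟧)) ∈ Submodule.span R (Set.range fun k => shift k α) := by
  rw [shift_mul_polynomial α hγ]
  exact Submodule.sum_mem _ fun j _ =>
    Submodule.smul_mem _ _ (Submodule.subset_span ⟨e - j, rfl⟩)

end CommSemiring

theorem finite_span_of_finite {R M : Type*} [Semiring R] [Finite R] [AddCommMonoid M]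
    [Module R M] {s : Set M} (hs : s.Finite) : (Submodule.span R s : Set M).Finite :=
  have := Module.Finite.span_of_finite R hs
  have := Module.finite_of_finite R (M := Submodule.span R s)
  Set.toFinite _

/-- Let `F` be a finite field and `α ∈ F⟦X⟧` eventually periodic.  Then
`{ shift_e (α·γ) : e ∈ ℕ, γ ∈ F[X], deg γ < e }` is finite.  Likewise, for eventually
periodic `β`, the set `{ shift_e β : e ∈ ℕ }` is finite. -/
theorem finitely_many_states_of_eventually_periodic
    {F : Type*} [Field F] [Fintype F] (α β : PowerSeries F)
    (hα : EventuallyPeriodic α) (hβ : EventuallyPeriodic β) :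
    Set.Finite {δ : PowerSeries F | ∃ (e : ℕ) (γ : Polynomial F),
        γ.degree < (e : ℕ) ∧ δ = shift e (α * (γ : PowerSeries F))}
    ∧ Set.Finite {δ : PowerSeries F | ∃ e : ℕ, δ = shift e β} := by
  constructor
  · refine (finite_span_of_finite (R := F) hα.finite_range_shift).subset ?_
    rintro _ ⟨e, γ, hγ, rfl⟩
    exact shift_mul_polynomial_mem_span α hγ
  · refine hβ.finite_range_shift.subset ?_
    rintro _ ⟨e, rfl⟩
    exact ⟨e, rfl⟩

end RoverNekrashevych
end

section
/- For every prime power q ≥ 3 there exists a subgroup G of Aut(T_q) that is self-similar, finite-state, and coarsely diagonal, is not finitely generated, and has finite abelianization. -/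
namespace RoverNekrashevych

variable {X : Type*}

theorem _root_.Subgroup.FG.exists_le_of_monotone {G : Type*} [Group G] {K : Subgroup G}
    (hK : K.FG) {H : ℕ → Subgroup G} (hH : Monotone H) (hKH : ∀ g ∈ K, ∃ n, g ∈ H n) :
    ∃ n, K ≤ H n := by
  obtain ⟨S, rfl⟩ := hK
  choose! n hn using fun g hg => hKH g (Subgroup.subset_closure hg)
  exact ⟨S.sup n, (Subgroup.closure_le _).2 fun g hg => hH (Finset.le_sup hg) (hn g hg)⟩

theorem SelfSimilar.coarselyDiagonal {G : Subgroup (Equiv.Perm (List X))} (hG : SelfSimilar G)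
    (htors : ∀ f ∈ G, IsOfFinOrder f) : CoarselyDiagonal G := by
  intro f hf u
  obtain ⟨g, hg, hgf⟩ := hG f hf u
  exact ⟨g, hg, hgf, htors _ (G.mul_mem (G.inv_mem hg) hf)⟩

theorem exists_unit_isUnit_sub_one {K : Type*} [Field K] (hK : 2 < Nat.card K) :
    ∃ a : Kˣ, IsUnit ((a : K) - 1) := by
  have : Finite K := Nat.finite_of_card_ne_zero (by omega)
  have : Nontrivial Kˣ := by
    rw [← Finite.one_lt_card_iff_nontrivial, Nat.card_units]
    omega
  obtain ⟨a, ha⟩ := exists_ne (1 : Kˣ)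
  exact ⟨a, isUnit_iff_ne_zero.2 (sub_ne_zero.2 (Units.val_eq_one.not.2 ha))⟩

section AffineGroup

open Polynomial
open scoped commutatorElement

variable {Y R : Type*}

theorem coeff_divX_iterate [Semiring R] (b : R[X]) (n i : ℕ) :
    (divX^[n] b).coeff i = b.coeff (n + i) := by
  induction n generalizing b with
  | zero => simp
  | succ n ih =>
    rw [Function.iterate_succ_apply, ih, coeff_divX]
    congr 1
    omega

theorem divX_iterate_eq_zero [Semiring R] {b : R[X]} {n : ℕ} (h : b.natDegree < n) :
    divX^[n] b = 0 := by
  ext i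
  rw [coeff_divX_iterate, coeff_zero]
  exact coeff_eq_zero_of_natDegree_lt (h.trans_le (Nat.le_add_right n i))

theorem finite_range_divX_iterate [Semiring R] (b : R[X]) :
    (Set.range fun n => divX^[n] b).Finite := by
  refine ((Set.finite_Iic (b.natDegree + 1)).image fun n => divX^[n] b).subset ?_
  rintro _ ⟨n, rfl⟩
  by_cases hn : n ≤ b.natDegree + 1
  · exact ⟨n, hn, rfl⟩
  · refine ⟨b.natDegree + 1, Set.mem_Iic.2 le_rfl, ?_⟩
    exact (divX_iterate_eq_zero (Nat.lt_succ_self _)).trans (divX_iterate_eq_zero (by omega)).symm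

theorem divX_smul_add [Semiring R] (a : R) (b b' : R[X]) :
    (a • b' + b).divX = a • b'.divX + b.divX := by
  rw [divX_add, smul_eq_C_mul, smul_eq_C_mul, divX_C_mul]

variable (e : Y ≃ R)

noncomputable def affineFun [Semiring R] (a : R) (b : R[X]) : List Y → List Y
  | [] => []
  | c :: w => e.symm (a * e c + b.coeff 0) :: affineFun a b.divX w

section Semiring

variable [Semiring R]

@[simp] theorem affineFun_nil (a : R) (b : R[X]) : affineFun e a b [] = [] := rfl

@[simp] theorem affineFun_cons (a : R) (b : R[X]) (c : Y) (w : List Y) :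
    affineFun e a b (c :: w) = e.symm (a * e c + b.coeff 0) :: affineFun e a b.divX w := rfl

theorem affineFun_append (a : R) (b : R[X]) (u w : List Y) :
    affineFun e a b (u ++ w) = affineFun e a b u ++ affineFun e a (divX^[u.length] b) w := by
  induction u generalizing b with
  | nil => rfl
  | cons c u ih => simp [ih]

@[simp] theorem length_affineFun (a : R) (b : R[X]) (w : List Y) :
    (affineFun e a b w).length = w.length := by
  induction w generalizing b with
  | nil => rfl
  | cons c w ih => simp [ih]

theorem state_affineFun (a : R) (b : R[X]) (u : List Y) :
    state (affineFun e a b) u = affineFun e a (divX^[u.length] b) := by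
  funext w
  rw [state, affineFun_append, List.drop_left' (length_affineFun e a b u)]

theorem affineFun_comp (a a' : R) (b b' : R[X]) (w : List Y) :
    affineFun e a b (affineFun e a' b' w) = affineFun e (a * a') (a • b' + b) w := by
  induction w generalizing b b' with
  | nil => rfl
  | cons c w ih =>
    simp only [affineFun_cons, Equiv.apply_symm_apply, divX_smul_add, ih, coeff_add, coeff_smul,
      smul_eq_mul, mul_add, mul_assoc, add_assoc]

theorem affineFun_one_zero : affineFun e (1 : R) 0 = id := by
  funext w
  induction w with
  | nil => rfl
  | cons c w ih => simpa [divX_zero] using ih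

end Semiring

variable [Ring R]

theorem affineFun_injective {a a' : R} {b b' : R[X]}
    (h : affineFun e a b = affineFun e a' b') : a = a' ∧ b = b' := by
  have head : ∀ {c c' : R[X]}, affineFun e a c = affineFun e a' c' → ∀ x : R,
      a * x + c.coeff 0 = a' * x + c'.coeff 0 := fun hc x => by
    simpa using congrFun hc [e.symm x]
  have tail (i : ℕ) : (divX^[i] b).coeff 0 = (divX^[i] b').coeff 0 := by
    have hi := congrArg (state · (List.replicate i (e.symm 0))) h
    simp only [state_affineFun, List.length_replicate] at hi
    simpa using head hi 0
  refine ⟨?_, ext fun i => by simpa [coeff_divX_iterate] using tail i⟩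
  simpa [show b.coeff 0 = b'.coeff 0 from tail 0] using head h 1

noncomputable def affinePerm (a : Rˣ) (b : R[X]) : Equiv.Perm (List Y) where
  toFun := affineFun e a b
  invFun := affineFun e ((a⁻¹ : Rˣ) : R) (-(((a⁻¹ : Rˣ) : R) • b))
  left_inv w := by simp [affineFun_comp, affineFun_one_zero]
  right_inv w := by simp [affineFun_comp, smul_smul, affineFun_one_zero]

theorem affinePerm_mul (a a' : Rˣ) (b b' : R[X]) :
    affinePerm e a b * affinePerm e a' b' = affinePerm e (a * a') ((a : R) • b' + b) :=
  Equiv.ext fun w => affineFun_comp e _ _ _ _ w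

theorem affinePerm_one_zero : affinePerm e (1 : Rˣ) 0 = 1 :=
  Equiv.ext fun w => congrFun (affineFun_one_zero e) w

theorem affinePerm_inv (a : Rˣ) (b : R[X]) :
    (affinePerm e a b)⁻¹ = affinePerm e a⁻¹ (-(((a⁻¹ : Rˣ) : R) • b)) :=
  Equiv.ext fun _ => rfl

theorem affinePerm_injective {a a' : Rˣ} {b b' : R[X]}
    (h : affinePerm e a b = affinePerm e a' b') : a = a' ∧ b = b' := by
  obtain ⟨ha, hb⟩ := affineFun_injective e (congrArg DFunLike.coe h)
  exact ⟨Units.ext ha, hb⟩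

theorem isTreeAut_affinePerm (a : Rˣ) (b : R[X]) : IsTreeAut (affinePerm e a b) :=
  ⟨rfl, fun u x => ⟨_, affineFun_append e _ _ u [x]⟩⟩

theorem affinePerm_one_pow (c : R[X]) (k : ℕ) :
    affinePerm e 1 c ^ k = affinePerm e 1 (k • c) := by
  induction k with
  | zero => rw [pow_zero, zero_smul, affinePerm_one_zero]
  | succ k ih => rw [pow_succ, ih, affinePerm_mul, one_mul, Units.val_one, one_smul, succ_nsmul']

theorem exists_affinePerm_pow_eq (a : Rˣ) (b : R[X]) (k : ℕ) :
    ∃ c, affinePerm e a b ^ k = affinePerm e (a ^ k) c := by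
  induction k with
  | zero => exact ⟨0, by rw [pow_zero, pow_zero, affinePerm_one_zero]⟩
  | succ k ih =>
    obtain ⟨c, hc⟩ := ih
    exact ⟨_, by rw [pow_succ, hc, affinePerm_mul, pow_succ]⟩

theorem isOfFinOrder_affinePerm [Finite R] (a : Rˣ) (b : R[X]) :
    IsOfFinOrder (affinePerm e a b) := by
  obtain ⟨c, hc⟩ := exists_affinePerm_pow_eq e a b (orderOf a)
  have htrans : IsOfFinOrder (affinePerm e 1 c) := by
    refine isOfFinOrder_iff_pow_eq_one.2
      ⟨ringChar R, Nat.pos_of_ne_zero (CharP.char_ne_zero_of_finite R _), ?_⟩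
    rw [affinePerm_one_pow, nsmul_eq_mul, CharP.cast_eq_zero, zero_mul, affinePerm_one_zero]
  rw [pow_orderOf_eq_one] at hc
  exact (hc ▸ htrans).of_pow (orderOf_pos a).ne'

noncomputable def affineSubgroup (M : Submodule R R[X]) : Subgroup (Equiv.Perm (List Y)) where
  carrier := {f | ∃ (a : Rˣ) (b : R[X]), b ∈ M ∧ f = affinePerm e a b}
  one_mem' := ⟨1, 0, M.zero_mem, (affinePerm_one_zero e).symm⟩
  mul_mem' := by
    rintro _ _ ⟨a, b, hb, rfl⟩ ⟨a', b', hb', rfl⟩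
    exact ⟨a * a', _, M.add_mem (M.smul_mem _ hb') hb, affinePerm_mul e a a' b b'⟩
  inv_mem' := by
    rintro _ ⟨a, b, hb, rfl⟩
    exact ⟨a⁻¹, _, M.neg_mem (M.smul_mem _ hb), affinePerm_inv e a b⟩

variable {e} in
theorem affinePerm_mem_affineSubgroup {M : Submodule R R[X]} (a : Rˣ) {b : R[X]} (hb : b ∈ M) :
    affinePerm e a b ∈ affineSubgroup e M :=
  ⟨a, b, hb, rfl⟩

theorem affineSubgroup_mono : Monotone (affineSubgroup (R := R) e) := by
  rintro M M' hM _ ⟨a, b, hb, rfl⟩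
  exact affinePerm_mem_affineSubgroup a (hM hb)

theorem isTreeAutGroup_affineSubgroup (M : Submodule R R[X]) :
    IsTreeAutGroup (affineSubgroup e M) := by
  rintro _ ⟨a, b, -, rfl⟩
  exact isTreeAut_affinePerm e a b

theorem finiteStateGroup_affineSubgroup (M : Submodule R R[X]) :
    FiniteStateGroup (affineSubgroup e M) := by
  rintro _ ⟨a, b, -, rfl⟩
  refine ((finite_range_divX_iterate b).image (affineFun e a)).subset ?_
  rintro _ ⟨u, rfl⟩
  exact ⟨_, ⟨u.length, rfl⟩, (state_affineFun e a b u).symm⟩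

theorem selfSimilar_affineSubgroup_top :
    SelfSimilar (affineSubgroup e (⊤ : Submodule R R[X])) := by
  rintro _ ⟨a, b, -, rfl⟩ u
  exact ⟨_, affinePerm_mem_affineSubgroup a trivial, (state_affineFun e a b u).symm⟩

theorem coarselyDiagonal_affineSubgroup_top [Finite R] :
    CoarselyDiagonal (affineSubgroup e (⊤ : Submodule R R[X])) :=
  (selfSimilar_affineSubgroup_top e).coarselyDiagonal fun _ ⟨a, b, _, hf⟩ =>
    hf ▸ isOfFinOrder_affinePerm e a b

theorem not_fg_affineSubgroup_top [Nontrivial R] :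
    ¬ (affineSubgroup e (⊤ : Submodule R R[X])).FG := by
  intro hfg
  obtain ⟨N, hN⟩ :=
    hfg.exists_le_of_monotone (H := fun N : ℕ => affineSubgroup e (degreeLE R N))
    (fun m n hmn => affineSubgroup_mono e (degreeLE_mono (by exact_mod_cast hmn)))
    (by
      rintro _ ⟨a, b, -, rfl⟩
      exact ⟨b.natDegree, affinePerm_mem_affineSubgroup a (mem_degreeLE.2 degree_le_natDegree)⟩)
  obtain ⟨a, b, hb, heq⟩ := hN (affinePerm_mem_affineSubgroup 1 (b := X ^ (N + 1)) trivial)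
  rw [← (affinePerm_injective e heq).2, mem_degreeLE, degree_X_pow] at hb
  exact absurd hb (by norm_cast; omega)

theorem commutatorElement_affinePerm (a : Rˣ) (c : R[X]) :
    ⁅affinePerm e a 0, affinePerm e 1 c⁆ = affinePerm e 1 (((a : R) - 1) • c) := by
  rw [sub_smul, one_smul]
  simp [commutatorElement_def, affinePerm_inv, affinePerm_mul, sub_eq_add_neg, add_comm]

theorem finite_abelianization_affineSubgroup_top [Finite R] {a₀ : Rˣ}
    (ha₀ : IsUnit ((a₀ : R) - 1)) :
    Finite (Abelianization (affineSubgroup e (⊤ : Submodule R R[X]))) := by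
  set G := affineSubgroup e (⊤ : Submodule R R[X])
  have mem (a : Rˣ) (b : R[X]) : affinePerm e a b ∈ G := affinePerm_mem_affineSubgroup a trivial
  have of_translation (b : R[X]) : Abelianization.of (⟨affinePerm e 1 b, mem 1 b⟩ : G) = 1 := by
    rw [← MonoidHom.mem_ker, Abelianization.ker_of]
    obtain ⟨u, hu⟩ := ha₀
    have hb : (⟨affinePerm e 1 b, mem 1 b⟩ : G) =
        ⁅(⟨affinePerm e a₀ 0, mem a₀ 0⟩ : G), ⟨affinePerm e 1 (↑u⁻¹ • b), mem 1 _⟩⁆ :=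
      Subtype.ext <| by
        simp only [commutatorElement_def, Subgroup.coe_mul, InvMemClass.coe_inv]
        rw [← commutatorElement_def, commutatorElement_affinePerm, ← hu, ← Units.smul_def,
          smul_inv_smul]
    exact hb ▸ Subgroup.commutator_mem_commutator trivial trivial
  refine Finite.of_surjective (fun a : Rˣ => Abelianization.of ⟨affinePerm e a 0, mem a 0⟩) ?_
  rintro ⟨⟨_, a, b, -, rfl⟩⟩
  have hab : (⟨affinePerm e a b, mem a b⟩ : G) =
      ⟨affinePerm e 1 b, mem 1 b⟩ * ⟨affinePerm e a 0, mem a 0⟩ :=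
    Subtype.ext (by simp [affinePerm_mul])
  refine ⟨a, ?_⟩
  rw [Abelianization.mk_eq_of, hab, map_mul, of_translation, one_mul]

end AffineGroup

/-- For every prime power `q ≥ 3` (and any alphabet `X` with `q` letters)
there is a subgroup `G` of `Aut(T_q)` that is self-similar, finite-state, and coarsely
diagonal, is not finitely generated, and has finite abelianization. -/
theorem exists_selfSimilar_not_fg_finite_abelianization
    (q : ℕ) (hq : IsPrimePow q) (hq3 : 3 ≤ q)
    {Y : Type*} [Fintype Y] (hY : Fintype.card Y = q) :
    ∃ G : Subgroup (Equiv.Perm (List Y)),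
      IsTreeAutGroup G ∧ SelfSimilar G ∧ FiniteStateGroup G ∧ CoarselyDiagonal G ∧
      ¬ Group.FG ↥G ∧ Finite (Abelianization ↥G) := by
  obtain ⟨p, n, hp, hn, rfl⟩ := hq
  have : Fact p.Prime := ⟨hp.nat_prime⟩
  have hcard : Nat.card (GaloisField p n) = p ^ n := GaloisField.card p n hn.ne'
  obtain ⟨e⟩ : Nonempty (Y ≃ GaloisField p n) := by
    rw [← Finite.card_eq, hcard, Nat.card_eq_fintype_card, hY]
  obtain ⟨a₀, ha₀⟩ := exists_unit_isUnit_sub_one (K := GaloisField p n) (by omega)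
  exact ⟨affineSubgroup e ⊤, isTreeAutGroup_affineSubgroup e ⊤, selfSimilar_affineSubgroup_top e,
    finiteStateGroup_affineSubgroup e ⊤, coarselyDiagonal_affineSubgroup_top e,
    (Group.fg_iff_subgroup_fg _).not.2 (not_fg_affineSubgroup_top e),
    finite_abelianization_affineSubgroup_top e ha₀⟩

end RoverNekrashevych
end
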